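/- Product of several Lucas-Pantograph exponentials: let u₁, …, u_m ∈ ℂ be nonzero and x ∈ ℂ, and assume the series defining exp_{s,t}(x, u_j) converges absolutely for each 1 ≤ j ≤ m. Then the series Σ_{n=0}^{∞} m̄_{(u₁,…,u_m)}^{(n)}·xⁿ/{n}_{s,t}! converges and ∏_{j=1}^{m} exp_{s,t}(x, u_j) = Σ_{n=0}^{∞} m̄_{(u₁,…,u_m)}^{(n)}·xⁿ/{n}_{s,t}!. -/

import Mathlib

open scoped BigOperators

noncomputable section

/-- The Lucas sequence `{n}_{s,t}`. -/
def lucasSeq (s t : ℂ) : ℕ → ℂ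
  | 0 => 0
  | 1 => 1
  | n + 2 => s * lucasSeq s t (n + 1) + t * lucasSeq s t n

/-- The Lucastorial `{n}_{s,t}!`. -/
def lucasFact (s t : ℂ) : ℕ → ℂ
  | 0 => 1
  | n + 1 => lucasFact s t n * lucasSeq s t (n + 1)

/-- The Lucasnomial coefficient `{n choose k}_{s,t}`. -/
def lucasBinom (s t : ℂ) (n k : ℕ) : ℂ :=
  lucasFact s t n / (lucasFact s t k * lucasFact s t (n - k))

/-- The `(u,v)`-deformed Lucasnomial power `(x ⊕_{u,v} y)^{(n)}`. -/
def lucasPow (s t u v x y : ℂ) (n : ℕ) : ℂ :=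
  ∑ k ∈ Finset.range (n + 1),
    lucasBinom s t n k * u ^ ((n - k).choose 2) * v ^ (k.choose 2) * x ^ (n - k) * y ^ k

/-- The Lucas-derivative with respect to the roots `p = φ`, `q = φ'`. -/
def lucasDeriv (p q : ℂ) (f : ℂ → ℂ) (x : ℂ) : ℂ :=
  (f (p * x) - f (q * x)) / ((p - q) * x)

/-- The Lucas-derivative, extended by `0` at `0`, as an operator suitable for iteration. -/
def lucasDeriv0 (p q : ℂ) (f : ℂ → ℂ) : ℂ → ℂ :=
  fun x => if x = 0 then 0 else (f (p * x) - f (q * x)) / ((p - q) * x)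

/-- The Lucas-Pantograph exponential `exp_{s,t}(z,u)`. -/
def lucasExp (s t u z : ℂ) : ℂ :=
  ∑' n : ℕ, u ^ (n.choose 2) * z ^ n / lucasFact s t n

/-- The Lucas-Pantograph sine `sin_{s,t}(z,u)`. -/
def lucasSin (s t u z : ℂ) : ℂ :=
  ∑' n : ℕ, (-1 : ℂ) ^ n * u ^ ((2 * n + 1).choose 2) * z ^ (2 * n + 1) / lucasFact s t (2 * n + 1)

/-- The Lucas-Pantograph cosine `cos_{s,t}(z,u)`. -/
def lucasCos (s t u z : ℂ) : ℂ :=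
  ∑' n : ℕ, (-1 : ℂ) ^ n * u ^ ((2 * n).choose 2) * z ^ (2 * n) / lucasFact s t (2 * n)

/-- The `u`-deformed Lucasnomial numbers `m̄_{(u₁,…,u_m)}^{(n)}`. -/
def lucasMultiNum (s t : ℂ) (m : ℕ) (u : Fin m → ℂ) (n : ℕ) : ℂ :=
  ∑ k ∈ Finset.Nat.antidiagonalTuple m n,
    (lucasFact s t n / ∏ j, lucasFact s t (k j)) * ∏ j, (u j) ^ ((k j).choose 2)

/-! The `n`-th term of the right-hand series is the sum, over tuples `k` with `k₁ + ⋯ + kₘ = n`,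
of the products `∏ⱼ u_j^{C(k_j,2)} x^{k_j} / {k_j}!`. So the statement is the `m`-fold Cauchy
product of absolutely convergent series: the product of the `m` sums is the sum of the
tuple-indexed family of products, which may then be regrouped according to `|k| = n`. -/

open Finset

section

variable {R ι : Type*} [NormedCommRing R]

theorem Fin.prod_consEquiv_apply {m : ℕ} (f : Fin (m + 1) → ι → R) (p : ι × (Fin m → ι)) :
    ∏ j, f j (Fin.consEquiv (fun _ => ι) p j) = f 0 p.1 * ∏ j, f j.succ (p.2 j) := by
  simp [Fin.consEquiv, Fin.prod_univ_succ]

theorem summable_norm_prod_pi {m : ℕ} {f : Fin m → ι → R}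
    (hf : ∀ j, Summable fun i => ‖f j i‖) :
    Summable fun k : Fin m → ι => ‖∏ j, f j (k j)‖ := by
  induction m with
  | zero => exact .of_finite
  | succ m ih =>
    have h := (hf 0).mul_norm (ih (f := fun j => f j.succ) fun j => hf j.succ)
    rw [← (Fin.consEquiv fun _ => ι).summable_iff]
    simpa only [Function.comp_def, Fin.prod_consEquiv_apply] using h

theorem hasSum_prod_pi_of_summable_norm [CompleteSpace R] {m : ℕ} {f : Fin m → ι → R}
    (hf : ∀ j, Summable fun i => ‖f j i‖) :
    HasSum (fun k : Fin m → ι => ∏ j, f j (k j)) (∏ j, ∑' i, f j i) := by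
  induction m with
  | zero => simp
  | succ m ih =>
    have hg := ih (f := fun j => f j.succ) fun j => hf j.succ
    have hfg := summable_mul_of_summable_norm (hf 0)
      (summable_norm_prod_pi (f := fun j => f j.succ) fun j => hf j.succ)
    have h := (hf 0).of_norm.hasSum.mul hg hfg
    rw [← (Fin.consEquiv fun _ => ι).hasSum_iff, Fin.prod_univ_succ]
    simpa only [Function.comp_def, Fin.prod_consEquiv_apply] using h

theorem hasSum_sum_antidiagonalTuple_of_summable_norm [CompleteSpace R] {m : ℕ}
    {f : Fin m → ℕ → R} (hf : ∀ j, Summable fun n => ‖f j n‖) :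
    HasSum (fun n => ∑ k ∈ Nat.antidiagonalTuple m n, ∏ j, f j (k j)) (∏ j, ∑' n, f j n) :=
  HasSum.sigma ((Nat.sigmaAntidiagonalTupleEquivTuple m).hasSum_iff.mpr
    (hasSum_prod_pi_of_summable_norm hf)) fun n =>
      (Nat.antidiagonalTuple m n).hasSum fun k => ∏ j, f j (k j)

end

theorem lucasFact_ne_zero {s t : ℂ} (hL : ∀ n : ℕ, 1 ≤ n → lucasSeq s t n ≠ 0) :
    ∀ n, lucasFact s t n ≠ 0
  | 0 => one_ne_zero
  | n + 1 => mul_ne_zero (lucasFact_ne_zero hL n) (hL (n + 1) n.succ_pos)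

theorem lucasMultiNum_mul_pow_div_lucasFact {s t : ℂ}
    (hL : ∀ n : ℕ, 1 ≤ n → lucasSeq s t n ≠ 0) {m : ℕ} (u : Fin m → ℂ) (x : ℂ) (n : ℕ) :
    lucasMultiNum s t m u n * x ^ n / lucasFact s t n
      = ∑ k ∈ Nat.antidiagonalTuple m n,
          ∏ j, u j ^ (k j).choose 2 * x ^ k j / lucasFact s t (k j) := by
  rw [lucasMultiNum, sum_mul, sum_div]
  refine sum_congr rfl fun k hk => ?_
  have hF := lucasFact_ne_zero hL
  rw [prod_div_distrib, prod_mul_distrib, prod_pow_eq_pow_sum, Nat.mem_antidiagonalTuple.mp hk]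
  field_simp [hF n, prod_ne_zero_iff.mpr fun j _ => hF (k j)]

theorem lucasExp_prod_general (s t : ℂ)
    (hL : ∀ n : ℕ, 1 ≤ n → lucasSeq s t n ≠ 0)
    (m : ℕ) (u : Fin m → ℂ) (x : ℂ)
    (hconv : ∀ j, Summable fun n : ℕ =>
      ‖(u j) ^ (n.choose 2) * x ^ n / lucasFact s t n‖) :
    HasSum (fun n : ℕ => lucasMultiNum s t m u n * x ^ n / lucasFact s t n)
      (∏ j, lucasExp s t (u j) x) := by
  simp_rw [lucasMultiNum_mul_pow_div_lucasFact hL]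
  exact hasSum_sum_antidiagonalTuple_of_summable_norm
    (f := fun j n => u j ^ n.choose 2 * x ^ n / lucasFact s t n) hconv

/-- Product of several Lucas-Pantograph exponentials. -/
theorem lucasExp_prod (s t : ℂ) (hs : s ≠ 0) (ht : t ≠ 0)
    (hL : ∀ n : ℕ, 1 ≤ n → lucasSeq s t n ≠ 0)
    (m : ℕ) (u : Fin m → ℂ) (hu : ∀ j, u j ≠ 0) (x : ℂ)
    (hconv : ∀ j, Summable fun n : ℕ =>
      ‖(u j) ^ (n.choose 2) * x ^ n / lucasFact s t n‖) :
    HasSum (fun n : ℕ => lucasMultiNum s t m u n * x ^ n / lucasFact s t n)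
      (∏ j, lucasExp s t (u j) x) :=
  lucasExp_prod_general s t hL m u x hconv
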